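/- arXiv:1810.03423 — 2 statements merged into one kernel-verified Lean document; each statement's English description precedes it below -/
import Mathlib

section
/- Let (T, Λ) be a Markov tree over a family of compatible frames. Then for every node v and every neighbour w ∈ ne(v), Λ(v) ⊥ Λ(V_{v,w}) | Λ(w). -/
open scoped NNReal

/-- A family of compatible frames (f.c.f.): a collection of finite nonempty frames
together with (unique) refinings between them, closed under composition, containing
identities, with minimal common refinements (binary joins). -/
structure FCF where
  /-- the frames of the family -/
  Frame : Type
  /-- the elements of each frame -/
  El : Frame → Type
  elFintype : ∀ Θ, Fintype (El Θ)
  elNonempty : ∀ Θ, Nonempty (El Θ)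
  /-- `le Θ Λ` holds iff the family contains a refining of `Θ` to `Λ`. -/
  le : Frame → Frame → Prop
  le_refl : ∀ Θ, le Θ Θ
  le_trans : ∀ {Θ Λ Ξ}, le Θ Λ → le Λ Ξ → le Θ Ξ
  le_antisymm : ∀ {Θ Λ}, le Θ Λ → le Λ Θ → Θ = Λ
  /-- the (unique) refining map of `Θ` to `Λ`, when `le Θ Λ` -/
  τ : ∀ {Θ Λ}, le Θ Λ → El Θ → Set (El Λ)
  τ_nonempty : ∀ {Θ Λ} (h : le Θ Λ) (θ : El Θ), (τ h θ).Nonempty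
  τ_disjoint : ∀ {Θ Λ} (h : le Θ Λ) (θ θ' : El Θ), θ ≠ θ' → τ h θ ∩ τ h θ' = ∅
  τ_cover : ∀ {Θ Λ} (h : le Θ Λ) (x : El Λ), ∃ θ, x ∈ τ h θ
  /-- the identity refining -/
  τ_refl : ∀ {Θ} (h : le Θ Θ) (θ : El Θ), τ h θ = {θ}
  /-- closure under composition of refinings -/
  τ_comp : ∀ {Θ Λ Ξ} (h₁ : le Θ Λ) (h₂ : le Λ Ξ) (h₃ : le Θ Ξ) (θ : El Θ),
    τ h₃ θ = ⋃ lam ∈ τ h₁ θ, τ h₂ lam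
  /-- identity of coarsenings: two coarsenings of a frame with the same blocks coincide -/
  coarsening_unique : ∀ {Θ₁ Θ₂ Λ} (h₁ : le Θ₁ Λ) (h₂ : le Θ₂ Λ),
    (∀ θ₁, ∃ θ₂, τ h₁ θ₁ = τ h₂ θ₂) → (∀ θ₂, ∃ θ₁, τ h₁ θ₁ = τ h₂ θ₂) → Θ₁ = Θ₂
  /-- minimal common refinement of two frames -/
  sup : Frame → Frame → Frame
  le_sup_left : ∀ Θ Λ, le Θ (sup Θ Λ)
  le_sup_right : ∀ Θ Λ, le Λ (sup Θ Λ)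
  sup_le : ∀ {Θ Λ Ξ}, le Θ Ξ → le Λ Ξ → le (sup Θ Λ) Ξ
  /-- every element of the minimal common refinement is the (unique) intersection point
  of a block of each factor -/
  sup_atom : ∀ {Θ Λ} (h₁ : le Θ (sup Θ Λ)) (h₂ : le Λ (sup Θ Λ)) (x : El (sup Θ Λ)),
    ∃ (θ : El Θ) (lam : El Λ), τ h₁ θ ∩ τ h₂ lam = {x}

namespace FCF

instance (F : FCF) (Θ : F.Frame) : Fintype (F.El Θ) := F.elFintype Θ

instance (F : FCF) (Θ : F.Frame) : Nonempty (F.El Θ) := F.elNonempty Θ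

instance instSemilatticeSup (F : FCF) : SemilatticeSup F.Frame where
  le := F.le
  le_refl := F.le_refl
  le_trans := fun _ _ _ => F.le_trans
  le_antisymm := fun _ _ => F.le_antisymm
  sup := F.sup
  le_sup_left := F.le_sup_left
  le_sup_right := F.le_sup_right
  sup_le := fun _ _ _ h h' => F.sup_le h h'

/-- the indicator potential `f_p` of the support of a potential -/
noncomputable def fpot {X : Type} (p : X → ℝ≥0) : X → ℝ≥0 := fun x =>
  haveI := Classical.propDecidable (0 < p x)
  if 0 < p x then 1 else 0

/-- the support of a potential -/
def psupp {X : Type} (p : X → ℝ≥0) : Set X := {x | 0 < p x}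

/-- the likelihood (plausibility of singletons) function of a set potential -/
noncomputable def plfn {X : Type} (m : Set X → ℝ≥0) : X → ℝ≥0 :=
  fun x => ∑ᶠ (S : Set X) (_ : x ∈ S), m S

variable (F : FCF)

/-- `θ` and `lam` are compatible: their refinings to the minimal common refinement
of the two frames intersect. -/
def compat {Θ Λ : F.Frame} (θ : F.El Θ) (lam : F.El Λ) : Prop :=
  (F.τ (F.le_sup_left Θ Λ) θ ∩ F.τ (F.le_sup_right Θ Λ) lam).Nonempty

/-- `(θ₁, θ₂, lam) ∈ R(Θ₁, Θ₂, Λ)`: joint compatibility of a triple. -/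
def compat3 {Θ₁ Θ₂ Λ : F.Frame} (θ₁ : F.El Θ₁) (θ₂ : F.El Θ₂) (lam : F.El Λ) : Prop :=
  (F.τ (F.le_trans (F.le_sup_left Θ₁ Θ₂) (F.le_sup_left (F.sup Θ₁ Θ₂) Λ)) θ₁ ∩
    F.τ (F.le_trans (F.le_sup_right Θ₁ Θ₂) (F.le_sup_left (F.sup Θ₁ Θ₂) Λ)) θ₂ ∩
    F.τ (F.le_sup_right (F.sup Θ₁ Θ₂) Λ) lam).Nonempty

/-- `Θ₁ ⊥ Θ₂ | Λ` : conditional independence of two frames given a third,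
`R_λ(Θ₁,Θ₂) = R_λ(Θ₁) × R_λ(Θ₂)` for every `λ ∈ Λ`. -/
def CondIndep (Θ₁ Θ₂ Λ : F.Frame) : Prop :=
  ∀ (lam : F.El Λ) (θ₁ : F.El Θ₁) (θ₂ : F.El Θ₂),
    F.compat3 θ₁ θ₂ lam ↔ (F.compat θ₁ lam ∧ F.compat θ₂ lam)

/-- joint compatibility of a family of elements together with `lam`. -/
def compatFam {ι : Type} {Θ : ι → F.Frame} {Λ : F.Frame}
    (θ : ∀ i, F.El (Θ i)) (lam : F.El Λ) : Prop :=
  ∃ (Ξ : F.Frame) (hΘ : ∀ i, F.le (Θ i) Ξ) (hΛ : F.le Λ Ξ) (x : F.El Ξ),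
    (∀ i, x ∈ F.τ (hΘ i) (θ i)) ∧ x ∈ F.τ hΛ lam

/-- `⊥ {Θ_i : i ∈ ι} | Λ` : conditional independence of a family of frames given `Λ`,
`R_λ(Θ₁,…,Θₙ) = R_λ(Θ₁) × ⋯ × R_λ(Θₙ)` for every `λ ∈ Λ`. -/
def CondIndepFam {ι : Type} (Θ : ι → F.Frame) (Λ : F.Frame) : Prop :=
  ∀ (lam : F.El Λ) (θ : ∀ i, F.El (Θ i)),
    F.compatFam θ lam ↔ ∀ i, F.compat (θ i) lam

/-- `t_Λ(x)`, the unique element of the coarsening `Λ` whose block contains `x`. -/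
noncomputable def proj {Λ Θ : F.Frame} (h : F.le Λ Θ) (x : F.El Θ) : F.El Λ :=
  (F.τ_cover h x).choose

/-- probability potentials on the frame `Θ` -/
abbrev Pot (Θ : F.Frame) : Type := F.El Θ → ℝ≥0

/-- the combination of two probability potentials, on the join of their domains -/
noncomputable def combine {Θ₁ Θ₂ : F.Frame} (p₁ : F.Pot Θ₁) (p₂ : F.Pot Θ₂) :
    F.Pot (F.sup Θ₁ Θ₂) :=
  fun x => p₁ (F.proj (F.le_sup_left Θ₁ Θ₂) x) * p₂ (F.proj (F.le_sup_right Θ₁ Θ₂) x)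

/-- the transport `π_Λ(p)` of a probability potential to the frame `Λ` -/
noncomputable def transport {Θ : F.Frame} (p : F.Pot Θ) (Λ : F.Frame) : F.Pot Λ :=
  fun lam => ∑ᶠ (θ : F.El Θ) (_ : F.compat θ lam), p θ

/-- the max-transport `t^max_Λ(p)` of a probability potential to the frame `Λ` -/
noncomputable def maxTransport {Θ : F.Frame} (p : F.Pot Θ) (Λ : F.Frame) : F.Pot Λ :=
  fun lam => ⨆ (θ : F.El Θ) (_ : F.compat θ lam), p θ

/-- combination of two set potentials, on the join of their domains -/
noncomputable def setCombine {Θ₁ Θ₂ : F.Frame} (m₁ : Set (F.El Θ₁) → ℝ≥0)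
    (m₂ : Set (F.El Θ₂) → ℝ≥0) : Set (F.El (F.sup Θ₁ Θ₂)) → ℝ≥0 :=
  fun S => ∑ᶠ (S₁ : Set (F.El Θ₁)) (S₂ : Set (F.El Θ₂))
    (_ : (⋃ θ ∈ S₁, F.τ (F.le_sup_left Θ₁ Θ₂) θ) ∩
         (⋃ θ ∈ S₂, F.τ (F.le_sup_right Θ₁ Θ₂) θ) = S),
    m₁ S₁ * m₂ S₂

/-- the conditional `p_{Θ|Λ} = π_Θ(p) · (π_Λ(p))⁻¹` of `p` for `Θ` given `Λ ≤ Θ` -/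
noncomputable def condl {Δ : F.Frame} (p : F.Pot Δ) {Λ Θ : F.Frame} (h : F.le Λ Θ) :
    F.Pot Θ :=
  fun θ => F.transport p Θ θ * (F.transport p Λ (F.proj h θ))⁻¹

/-- the conditional `p_{Θ|Λ} = π_{Θ∨Λ}(p) · (π_Λ(p))⁻¹` of `p` for arbitrary `Θ` given `Λ` -/
noncomputable def condl2 {Δ : F.Frame} (p : F.Pot Δ) (Θ Λ : F.Frame) :
    F.Pot (F.sup Θ Λ) :=
  fun x => F.transport p (F.sup Θ Λ) x *
    (F.transport p Λ (F.proj (F.le_sup_right Θ Λ) x))⁻¹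

/-- the solution set `s_p^Λ(lam)`: maximizers of `p` among elements compatible with `lam` -/
noncomputable def solSet {Θ : F.Frame} (p : F.Pot Θ) (Λ : F.Frame) (lam : F.El Λ) :
    Set (F.El Θ) :=
  {θ | F.compat θ lam ∧ p θ = F.maxTransport p Λ lam}

end FCF

namespace FCF

/-- the vertex set `V_{v,w}` of the subtree containing `w` obtained by deleting `v` -/
def subtreeVerts {V : Type} (G : SimpleGraph V) (v w : V) : Set V :=
  {u | ∃ p : G.Walk w u, v ∉ p.support}

theorem subtreeVerts_nonempty {V : Type} (G : SimpleGraph V) {v w : V}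
    (h : G.Adj v w) : (subtreeVerts G v w).Nonempty := by
  refine ⟨w, SimpleGraph.Walk.nil, ?_⟩
  simpa using h.ne

/-- the join `Λ(U) = ⋁_{v ∈ U} Λ(v)` of the labels of a (finite, nonempty) set of nodes -/
noncomputable def setSup (F : FCF) {V : Type} [Finite V] (lab : V → F.Frame)
    (S : Set V) (hS : S.Nonempty) : F.Frame :=
  S.toFinite.toFinset.sup' (by simpa using hS) lab

/-- a labeled tree `(T, Λ)` is a Markov tree if for every node `v`,
`⊥ {Λ(V_{v,w}) : w ∈ ne(v)} | Λ(v)`. -/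
def IsMarkovTree (F : FCF) {V : Type} [Finite V] (G : SimpleGraph V)
    (lab : V → F.Frame) : Prop :=
  G.IsTree ∧ ∀ v : V, F.CondIndepFam
    (fun w : {w : V // G.Adj v w} =>
      F.setSup lab (subtreeVerts G v w.1) (subtreeVerts_nonempty G w.2))
    (lab v)

/-! ### Auxiliary lemmas -/

section Aux

variable (F : FCF)

lemma mem_tau_unique {Θ Λ : F.Frame} (h : F.le Θ Λ) {θ θ' : F.El Θ} {x : F.El Λ}
    (hx : x ∈ F.τ h θ) (hx' : x ∈ F.τ h θ') : θ = θ' := by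
  by_contra hne
  have hd := F.τ_disjoint h θ θ' hne
  have hmem : x ∈ F.τ h θ ∩ F.τ h θ' := ⟨hx, hx'⟩
  rw [hd] at hmem
  exact hmem

lemma proj_mem {Θ Λ : F.Frame} (h : F.le Θ Λ) (x : F.El Λ) :
    x ∈ F.τ h (F.proj h x) :=
  (F.τ_cover h x).choose_spec

lemma block_mono {A B C : F.Frame} (hab : F.le A B) (hbc : F.le B C) (hac : F.le A C)
    {a : F.El A} {b : F.El B} (hb : b ∈ F.τ hab a) : F.τ hbc b ⊆ F.τ hac a := by
  rw [F.τ_comp hab hbc hac a]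
  exact Set.subset_biUnion_of_mem hb

lemma mem_block_iff {A B C : F.Frame} (hab : F.le A B) (hbc : F.le B C) (hac : F.le A C)
    {a : F.El A} {b : F.El B} {y : F.El C} (hy : y ∈ F.τ hbc b) :
    y ∈ F.τ hac a ↔ b ∈ F.τ hab a := by
  constructor
  · intro hmem
    rw [F.τ_comp hab hbc hac a] at hmem
    simp only [Set.mem_iUnion] at hmem
    obtain ⟨b', hb', hyb'⟩ := hmem
    rwa [F.mem_tau_unique hbc hy hyb']
  · intro hb
    exact F.block_mono hab hbc hac hb hy

/-- two elements of `Ω` lie in the same block of the coarsening `Θ`. -/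
def sameBlock {Θ Ω : F.Frame} (h : F.le Θ Ω) (y y' : F.El Ω) : Prop :=
  ∃ θ : F.El Θ, y ∈ F.τ h θ ∧ y' ∈ F.τ h θ

lemma mem_of_sameBlock {Θ Ω : F.Frame} {h : F.le Θ Ω} {y y' : F.El Ω} {θ : F.El Θ}
    (sb : F.sameBlock h y y') (hm : y' ∈ F.τ h θ) : y ∈ F.τ h θ := by
  obtain ⟨θ', ha, hb⟩ := sb
  rw [F.mem_tau_unique h hm hb]
  exact ha

lemma sameBlock_mono {Θ Θ' Ω : F.Frame} (hΘ : F.le Θ Θ') (h' : F.le Θ' Ω) (h : F.le Θ Ω)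
    {y y' : F.El Ω} (sb : F.sameBlock h' y y') : F.sameBlock h y y' := by
  obtain ⟨x, hx, hx'⟩ := sb
  exact ⟨F.proj hΘ x, F.block_mono hΘ h' h (F.proj_mem hΘ x) hx,
    F.block_mono hΘ h' h (F.proj_mem hΘ x) hx'⟩

lemma sameBlock_sup {Θ Λ Ω : F.Frame} (h1 : F.le Θ Ω) (h2 : F.le Λ Ω)
    (hs : F.le (F.sup Θ Λ) Ω) {y y' : F.El Ω} :
    F.sameBlock hs y y' ↔ F.sameBlock h1 y y' ∧ F.sameBlock h2 y y' := by
  constructor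
  · intro sb
    exact ⟨F.sameBlock_mono (F.le_sup_left Θ Λ) hs h1 sb,
      F.sameBlock_mono (F.le_sup_right Θ Λ) hs h2 sb⟩
  · rintro ⟨⟨θ, hyθ, hy'θ⟩, ⟨lam, hyl, hy'l⟩⟩
    obtain ⟨θ', lam', hatom⟩ :=
      F.sup_atom (F.le_sup_left Θ Λ) (F.le_sup_right Θ Λ) (F.proj hs y)
    have hxmem : F.proj hs y ∈ F.τ (F.le_sup_left Θ Λ) θ' ∩ F.τ (F.le_sup_right Θ Λ) lam' := by
      rw [hatom]; rfl
    have hymem := F.proj_mem hs y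
    have hθ : θ' = θ :=
      F.mem_tau_unique h1 (F.block_mono (F.le_sup_left Θ Λ) hs h1 hxmem.1 hymem) hyθ
    have hl : lam' = lam :=
      F.mem_tau_unique h2 (F.block_mono (F.le_sup_right Θ Λ) hs h2 hxmem.2 hymem) hyl
    have hy'm := F.proj_mem hs y'
    have e1 : F.proj hs y' ∈ F.τ (F.le_sup_left Θ Λ) θ' := by
      rw [hθ]
      exact (F.mem_block_iff (F.le_sup_left Θ Λ) hs h1 hy'm).mp hy'θ
    have e2 : F.proj hs y' ∈ F.τ (F.le_sup_right Θ Λ) lam' := by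
      rw [hl]
      exact (F.mem_block_iff (F.le_sup_right Θ Λ) hs h2 hy'm).mp hy'l
    have hx' : F.proj hs y' ∈ ({F.proj hs y} : Set (F.El (F.sup Θ Λ))) := by
      rw [← hatom]; exact ⟨e1, e2⟩
    refine ⟨F.proj hs y, hymem, ?_⟩
    rw [← Set.mem_singleton_iff.mp hx']
    exact hy'm

lemma sameBlock_of_forall {V : Type} (s : Finset V) (hs : s.Nonempty) (lab : V → F.Frame)
    {Ω : F.Frame} {y y' : F.El Ω}
    (hall : ∀ x ∈ s, ∃ hx : F.le (lab x) Ω, F.sameBlock hx y y')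
    (h : F.le (s.sup' hs lab) Ω) : F.sameBlock h y y' := by
  revert hall h
  induction hs using Finset.Nonempty.cons_induction with
  | singleton a =>
    intro hall
    rw [Finset.sup'_singleton]
    intro h
    obtain ⟨hx, sb⟩ := hall a (Finset.mem_singleton_self a)
    exact sb
  | cons a s ha hs ih =>
    intro hall
    rw [Finset.sup'_cons hs]
    intro h
    have h1 : F.le (lab a) Ω := F.le_trans (F.le_sup_left _ _) h
    have h2 : F.le (s.sup' hs lab) Ω := F.le_trans (F.le_sup_right _ _) h
    have sb2 : F.sameBlock h2 y y' :=
      ih (fun x hx => hall x (Finset.mem_cons_of_mem hx)) h2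
    obtain ⟨ha', sba⟩ := hall a (Finset.mem_cons_self a s)
    exact (F.sameBlock_sup h1 h2 h).mpr ⟨sba, sb2⟩

lemma compat_iff_top {Θ Λ Ω : F.Frame} (hΘ : F.le Θ Ω) (hΛ : F.le Λ Ω)
    (θ : F.El Θ) (lam : F.El Λ) :
    F.compat θ lam ↔ ∃ y : F.El Ω, y ∈ F.τ hΘ θ ∧ y ∈ F.τ hΛ lam := by
  have hS : F.le (F.sup Θ Λ) Ω := F.sup_le hΘ hΛ
  constructor
  · rintro ⟨x, hx1, hx2⟩
    obtain ⟨y, hy⟩ := F.τ_nonempty hS x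
    exact ⟨y, (F.mem_block_iff (F.le_sup_left Θ Λ) hS hΘ hy).mpr hx1,
      (F.mem_block_iff (F.le_sup_right Θ Λ) hS hΛ hy).mpr hx2⟩
  · rintro ⟨y, hy1, hy2⟩
    exact ⟨F.proj hS y,
      (F.mem_block_iff (F.le_sup_left Θ Λ) hS hΘ (F.proj_mem hS y)).mp hy1,
      (F.mem_block_iff (F.le_sup_right Θ Λ) hS hΛ (F.proj_mem hS y)).mp hy2⟩

lemma compat3_iff_top {Θ₁ Θ₂ Λ Ω : F.Frame} (h1 : F.le Θ₁ Ω) (h2 : F.le Θ₂ Ω)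
    (hΛ : F.le Λ Ω) (θ₁ : F.El Θ₁) (θ₂ : F.El Θ₂) (lam : F.El Λ) :
    F.compat3 θ₁ θ₂ lam ↔
      ∃ y : F.El Ω, y ∈ F.τ h1 θ₁ ∧ y ∈ F.τ h2 θ₂ ∧ y ∈ F.τ hΛ lam := by
  have ha1 : F.le Θ₁ (F.sup (F.sup Θ₁ Θ₂) Λ) :=
    F.le_trans (F.le_sup_left Θ₁ Θ₂) (F.le_sup_left (F.sup Θ₁ Θ₂) Λ)
  have ha2 : F.le Θ₂ (F.sup (F.sup Θ₁ Θ₂) Λ) :=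
    F.le_trans (F.le_sup_right Θ₁ Θ₂) (F.le_sup_left (F.sup Θ₁ Θ₂) Λ)
  have ha3 : F.le Λ (F.sup (F.sup Θ₁ Θ₂) Λ) := F.le_sup_right (F.sup Θ₁ Θ₂) Λ
  have hT : F.le (F.sup (F.sup Θ₁ Θ₂) Λ) Ω := F.sup_le (F.sup_le h1 h2) hΛ
  constructor
  · rintro ⟨x, ⟨hx1, hx2⟩, hx3⟩
    obtain ⟨y, hy⟩ := F.τ_nonempty hT x
    exact ⟨y, (F.mem_block_iff ha1 hT h1 hy).mpr hx1,
      (F.mem_block_iff ha2 hT h2 hy).mpr hx2,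
      (F.mem_block_iff ha3 hT hΛ hy).mpr hx3⟩
  · rintro ⟨y, hy1, hy2, hy3⟩
    exact ⟨F.proj hT y,
      ⟨(F.mem_block_iff ha1 hT h1 (F.proj_mem hT y)).mp hy1,
        (F.mem_block_iff ha2 hT h2 (F.proj_mem hT y)).mp hy2⟩,
      (F.mem_block_iff ha3 hT hΛ (F.proj_mem hT y)).mp hy3⟩

lemma compatFam_iff_top {ι : Type} {Θ : ι → F.Frame} {Λ Ω : F.Frame}
    (hΘ : ∀ i, F.le (Θ i) Ω) (hΛ : F.le Λ Ω) (θ : ∀ i, F.El (Θ i)) (lam : F.El Λ) :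
    F.compatFam θ lam ↔
      ∃ y : F.El Ω, (∀ i, y ∈ F.τ (hΘ i) (θ i)) ∧ y ∈ F.τ hΛ lam := by
  constructor
  · rintro ⟨Ξ, hΘ', hΛ', x, hx, hxl⟩
    have hΞ : F.le Ξ (F.sup Ξ Ω) := F.le_sup_left Ξ Ω
    have hΩ : F.le Ω (F.sup Ξ Ω) := F.le_sup_right Ξ Ω
    obtain ⟨y, hy⟩ := F.τ_nonempty hΞ x
    refine ⟨F.proj hΩ y, fun i => ?_, ?_⟩
    · have hyi : y ∈ F.τ (F.le_trans (hΘ' i) hΞ) (θ i) :=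
        F.block_mono (hΘ' i) hΞ (F.le_trans (hΘ' i) hΞ) (hx i) hy
      exact (F.mem_block_iff (hΘ i) hΩ (F.le_trans (hΘ' i) hΞ) (F.proj_mem hΩ y)).mp hyi
    · have hyl : y ∈ F.τ (F.le_trans hΛ' hΞ) lam :=
        F.block_mono hΛ' hΞ (F.le_trans hΛ' hΞ) hxl hy
      exact (F.mem_block_iff hΛ hΩ (F.le_trans hΛ' hΞ) (F.proj_mem hΩ y)).mp hyl
  · rintro ⟨y, h1, h2⟩
    exact ⟨Ω, hΘ, hΛ, y, h1, h2⟩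

end Aux

lemma subtree_step {V : Type} (G : SimpleGraph V) {v w x : V}
    (hx : x ∈ subtreeVerts G v w) (hxw : x ≠ w) :
    ∃ u, G.Adj w u ∧ u ≠ v ∧ x ∈ subtreeVerts G w u := by
  classical
  obtain ⟨p, hp⟩ := hx
  have hbp : v ∉ p.bypass.support := fun hmem => hp (p.support_bypass_subset hmem)
  have hpath : p.bypass.IsPath := p.bypass_isPath
  set q := p.bypass with hq
  clear_value q
  clear hq hp p
  cases q with
  | nil => exact absurd rfl hxw
  | @cons _ u _ h' r =>
    rw [SimpleGraph.Walk.cons_isPath_iff] at hpath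
    refine ⟨u, h', ?_, r, hpath.2⟩
    rintro rfl
    exact hbp (by simp [SimpleGraph.Walk.support_cons, SimpleGraph.Walk.start_mem_support])

/-- In a Markov tree, for every node `v` and every neighbour `w`,
`Λ(v) ⊥ Λ(V_{v,w}) | Λ(w)`. -/
theorem markovTree_neighbour_condIndep (F : FCF) {V : Type} [Finite V]
    (G : SimpleGraph V) (lab : V → F.Frame) (hT : F.IsMarkovTree G lab)
    (v w : V) (h : G.Adj v w) :
    F.CondIndep (lab v)
      (F.setSup lab (subtreeVerts G v w) (subtreeVerts_nonempty G h)) (lab w) := by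
  classical
  haveI : Fintype V := Fintype.ofFinite V
  have hne : (Finset.univ : Finset V).Nonempty := ⟨v, Finset.mem_univ v⟩
  set Ω := (Finset.univ : Finset V).sup' hne lab with hΩdef
  have hlab : ∀ x : V, F.le (lab x) Ω := fun x => Finset.le_sup' lab (Finset.mem_univ x)
  have hsetSup : ∀ (S : Set V) (hS : S.Nonempty), F.le (F.setSup lab S hS) Ω := by
    intro S hS
    show F.setSup lab S hS ≤ Ω
    exact Finset.sup'_le _ _ fun x _ => hlab x
  have hv : F.le (lab v) Ω := hlab v
  have hw : F.le (lab w) Ω := hlab w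
  have h2 : F.le (F.setSup lab (subtreeVerts G v w) (subtreeVerts_nonempty G h)) Ω :=
    hsetSup _ _
  intro lam θ₁ θ₂
  rw [F.compat3_iff_top hv h2 hw, F.compat_iff_top hv hw, F.compat_iff_top h2 hw]
  constructor
  · rintro ⟨y, a, b, c⟩
    exact ⟨⟨y, a, c⟩, ⟨y, b, c⟩⟩
  · rintro ⟨⟨y₁, hy₁θ, hy₁l⟩, ⟨y₂, hy₂θ, hy₂l⟩⟩
    have hΘu : ∀ u : {u : V // G.Adj w u},
        F.le (F.setSup lab (subtreeVerts G w u.1) (subtreeVerts_nonempty G u.2)) Ω :=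
      fun u => hsetSup _ _
    set η : ∀ u : {u : V // G.Adj w u},
        F.El (F.setSup lab (subtreeVerts G w u.1) (subtreeVerts_nonempty G u.2)) :=
      fun u => if u.1 = v then F.proj (hΘu u) y₁ else F.proj (hΘu u) y₂ with hη
    have hη1 : ∀ (u : {u : V // G.Adj w u}), u.1 = v → η u = F.proj (hΘu u) y₁ :=
      fun u hu => by simp only [hη, if_pos hu]
    have hη2 : ∀ (u : {u : V // G.Adj w u}), u.1 ≠ v → η u = F.proj (hΘu u) y₂ :=
      fun u hu => by simp only [hη, if_neg hu]
    have hcomp : ∀ u, F.compat (η u) lam := by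
      intro u
      rw [F.compat_iff_top (hΘu u) hw]
      by_cases huv : u.1 = v
      · refine ⟨y₁, ?_, hy₁l⟩
        rw [hη1 u huv];  exact F.proj_mem _ y₁
      · refine ⟨y₂, ?_, hy₂l⟩
        rw [hη2 u huv];  exact F.proj_mem _ y₂
    have hfam : F.compatFam η lam := (hT.2 w lam η).mpr hcomp
    rw [F.compatFam_iff_top hΘu hw] at hfam
    obtain ⟨y, hyη, hyl⟩ := hfam
    refine ⟨y, ?_, ?_, hyl⟩
    · -- `y` lies in the block of `θ₁`
      have hadj : G.Adj w v := h.symm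
      let u₀ : {u : V // G.Adj w u} := ⟨v, hadj⟩
      have hmemv : v ∈ subtreeVerts G w v := ⟨SimpleGraph.Walk.nil, by simpa using hadj.ne⟩
      have hle : F.le (lab v)
          (F.setSup lab (subtreeVerts G w u₀.1) (subtreeVerts_nonempty G u₀.2)) :=
        Finset.le_sup' lab ((Set.Finite.mem_toFinset _).mpr hmemv)
      have hηu₀ : y₁ ∈ F.τ (hΘu u₀) (η u₀) := by
        rw [hη1 u₀ rfl]; exact F.proj_mem _ y₁
      have sb : F.sameBlock (hΘu u₀) y y₁ := ⟨η u₀, hyη u₀, hηu₀⟩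
      exact F.mem_of_sameBlock (F.sameBlock_mono hle (hΘu u₀) hv sb) hy₁θ
    · -- `y` lies in the block of `θ₂`
      refine F.mem_of_sameBlock ?_ hy₂θ
      refine F.sameBlock_of_forall _ _ lab ?_ h2
      intro x hx
      replace hx : x ∈ subtreeVerts G v w := (Set.Finite.mem_toFinset _).mp hx
      refine ⟨hlab x, ?_⟩
      by_cases hxw : x = w
      · subst hxw
        exact ⟨lam, hyl, hy₂l⟩
      · obtain ⟨u, hwu, huv, hxu⟩ := subtree_step G hx hxw
        let uu : {u : V // G.Adj w u} := ⟨u, hwu⟩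
        have hηuu : y₂ ∈ F.τ (hΘu uu) (η uu) := by
          rw [hη2 uu ?_]
          · exact F.proj_mem _ y₂
          · -- uu.1 ≠ v
            exact huv
        have sb : F.sameBlock (hΘu uu) y y₂ := ⟨η uu, hyη uu, hηuu⟩
        have hle : F.le (lab x)
            (F.setSup lab (subtreeVerts G w uu.1) (subtreeVerts_nonempty G uu.2)) :=
          Finset.le_sup' lab ((Set.Finite.mem_toFinset _).mpr hxu)
        exact F.sameBlock_mono hle (hΘu uu) (hlab x) sb

end FCF
end

section
/- Let Θ₁, Θ₂, Λ be frames of a family of compatible frames with Θ₁ ⊥ Θ₂ | Λ, and let p₁, p₂ be probability potentials with d(p₁) = Θ₁ and d(p₂) = Θ₂. Then for every λ ∈ Λ: max_{θ∈Θ₁∨Θ₂ : θ∼λ} (p₁·p₂)(θ) = ( max_{θ₁∈Θ₁ : θ₁∼λ} p₁(θ₁) ) · ( max_{θ₂∈Θ₂ : θ₂∼λ} p₂(θ₂) ). -/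
open scoped NNReal

namespace FCF

variable {F : FCF}

lemma mem_proj {Λ Θ : F.Frame} (h : F.le Λ Θ) (x : F.El Θ) :
    x ∈ F.τ h (F.proj h x) :=
  (F.τ_cover h x).choose_spec

lemma proj_eq {Λ Θ : F.Frame} (h : F.le Λ Θ) {x : F.El Θ} {lam : F.El Λ}
    (hx : x ∈ F.τ h lam) : F.proj h x = lam := by
  by_contra hne
  have hd := F.τ_disjoint h _ _ hne
  have : x ∈ F.τ h (F.proj h x) ∩ F.τ h lam := ⟨mem_proj h x, hx⟩
  rw [hd] at this
  exact this

lemma mem_of_mem_comp {Θ Λ Ξ : F.Frame} (h₁ : F.le Θ Λ) (h₂ : F.le Λ Ξ)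
    (h₃ : F.le Θ Ξ) {θ : F.El Θ} {y : F.El Λ} {x : F.El Ξ}
    (hy : y ∈ F.τ h₁ θ) (hx : x ∈ F.τ h₂ y) : x ∈ F.τ h₃ θ := by
  rw [F.τ_comp h₁ h₂ h₃]
  exact Set.mem_biUnion hy hx

lemma exists_mid {Θ Λ Ξ : F.Frame} (h₁ : F.le Θ Λ) (h₂ : F.le Λ Ξ)
    (h₃ : F.le Θ Ξ) {θ : F.El Θ} {x : F.El Ξ}
    (hx : x ∈ F.τ h₃ θ) : ∃ y ∈ F.τ h₁ θ, x ∈ F.τ h₂ y := by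
  rw [F.τ_comp h₁ h₂ h₃] at hx
  simpa using hx

lemma compat_of_common {Θ Λ Ξ : F.Frame} (hΘ : F.le Θ Ξ) (hΛ : F.le Λ Ξ)
    {θ : F.El Θ} {lam : F.El Λ} {x : F.El Ξ}
    (h1 : x ∈ F.τ hΘ θ) (h2 : x ∈ F.τ hΛ lam) : F.compat θ lam := by
  have hs : F.le (F.sup Θ Λ) Ξ := F.sup_le hΘ hΛ
  obtain ⟨y, hy, hxy⟩ := exists_mid (F.le_sup_left Θ Λ) hs hΘ h1
  obtain ⟨y', hy', hxy'⟩ := exists_mid (F.le_sup_right Θ Λ) hs hΛ h2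
  have : y = y' := by
    have h1 := proj_eq hs hxy
    have h2 := proj_eq hs hxy'
    rw [← h1, h2]
  exact ⟨y, hy, this ▸ hy'⟩

lemma compat_common {Θ Λ Ξ : F.Frame} (hΘ : F.le Θ Ξ) (hΛ : F.le Λ Ξ)
    {θ : F.El Θ} {lam : F.El Λ} (h : F.compat θ lam) :
    ∃ x : F.El Ξ, x ∈ F.τ hΘ θ ∧ x ∈ F.τ hΛ lam := by
  obtain ⟨y, hy1, hy2⟩ := h
  have hs : F.le (F.sup Θ Λ) Ξ := F.sup_le hΘ hΛ
  obtain ⟨x, hx⟩ := F.τ_nonempty hs y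
  exact ⟨x, mem_of_mem_comp _ hs hΘ hy1 hx, mem_of_mem_comp _ hs hΛ hy2 hx⟩

lemma exists_compat (Θ Λ : F.Frame) (lam : F.El Λ) : ∃ θ : F.El Θ, F.compat θ lam := by
  obtain ⟨y, hy⟩ := F.τ_nonempty (F.le_sup_right Θ Λ) lam
  exact ⟨F.proj (F.le_sup_left Θ Λ) y, y, mem_proj _ y, hy⟩

/-- forward direction: a compatible `θ` in the join yields joint compatibility of its
projections with `lam`. -/
lemma compat3_of_compat {Θ₁ Θ₂ Λ : F.Frame} {θ : F.El (F.sup Θ₁ Θ₂)} {lam : F.El Λ}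
    (h : F.compat θ lam) :
    F.compat3 (F.proj (F.le_sup_left Θ₁ Θ₂) θ) (F.proj (F.le_sup_right Θ₁ Θ₂) θ) lam := by
  obtain ⟨x, hx1, hx2⟩ :=
    compat_common (F.le_sup_left (F.sup Θ₁ Θ₂) Λ) (F.le_sup_right (F.sup Θ₁ Θ₂) Λ) h
  exact ⟨x, ⟨mem_of_mem_comp _ _ _ (mem_proj (F.le_sup_left Θ₁ Θ₂) θ) hx1,
    mem_of_mem_comp _ _ _ (mem_proj (F.le_sup_right Θ₁ Θ₂) θ) hx1⟩, hx2⟩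

/-- backward direction: joint compatibility yields an element of the join compatible
with `lam` projecting to the given pair. -/
lemma compat_of_compat3 {Θ₁ Θ₂ Λ : F.Frame} {θ₁ : F.El Θ₁} {θ₂ : F.El Θ₂} {lam : F.El Λ}
    (h : F.compat3 θ₁ θ₂ lam) :
    ∃ θ : F.El (F.sup Θ₁ Θ₂), F.compat θ lam ∧
      F.proj (F.le_sup_left Θ₁ Θ₂) θ = θ₁ ∧ F.proj (F.le_sup_right Θ₁ Θ₂) θ = θ₂ := by
  obtain ⟨x, ⟨hx1, hx2⟩, hxl⟩ := h
  set hS := F.le_sup_left (F.sup Θ₁ Θ₂) Λ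
  set θ := F.proj hS x with hθ
  refine ⟨θ, compat_of_common hS (F.le_sup_right (F.sup Θ₁ Θ₂) Λ) (mem_proj hS x) hxl,
    ?_, ?_⟩
  · obtain ⟨y, hy, hxy⟩ := exists_mid (F.le_sup_left Θ₁ Θ₂) hS _ hx1
    have : y = θ := (proj_eq hS hxy).symm
    exact proj_eq (F.le_sup_left Θ₁ Θ₂) (this ▸ hy)
  · obtain ⟨y, hy, hxy⟩ := exists_mid (F.le_sup_right Θ₁ Θ₂) hS _ hx2
    have : y = θ := (proj_eq hS hxy).symm
    exact proj_eq (F.le_sup_right Θ₁ Θ₂) (this ▸ hy)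

open Classical in
lemma iSup_compat_eq_sup {X : Type} [Fintype X] [Nonempty X] (P : X → Prop)
    (f : X → ℝ≥0) :
    (⨆ (x : X) (_ : P x), f x) = (Finset.univ.filter P).sup f := by
  apply _root_.le_antisymm
  · exact ciSup_le' fun x => ciSup_le' fun hx =>
      Finset.le_sup (Finset.mem_filter.2 ⟨Finset.mem_univ x, hx⟩)
  · refine Finset.sup_le fun x hx => ?_
    have hPx := (Finset.mem_filter.1 hx).2
    calc f x = ⨆ _ : P x, f x := (ciSup_pos (f := fun _ : P x => f x) hPx).symm
      _ ≤ _ := le_ciSup (f := fun x => ⨆ _ : P x, f x) (Set.Finite.bddAbove (Set.finite_range _)) x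

/-- (Combination axiom for the max/product algebra.) If
`Θ₁ ⊥ Θ₂ | Λ`, `d(p₁) = Θ₁`, `d(p₂) = Θ₂`, then for every `λ ∈ Λ`,
`max_{θ∼λ} (p₁·p₂)(θ) = (max_{θ₁∼λ} p₁(θ₁)) · (max_{θ₂∼λ} p₂(θ₂))`. -/
theorem maxTransport_combine (F : FCF) (Θ₁ Θ₂ Λ : F.Frame)
    (hCI : F.CondIndep Θ₁ Θ₂ Λ) (p₁ : F.Pot Θ₁) (p₂ : F.Pot Θ₂) :
    ∀ lam : F.El Λ,
      (⨆ (θ : F.El (F.sup Θ₁ Θ₂)) (_ : F.compat θ lam), F.combine p₁ p₂ θ) =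
        (⨆ (θ₁ : F.El Θ₁) (_ : F.compat θ₁ lam), p₁ θ₁) *
        (⨆ (θ₂ : F.El Θ₂) (_ : F.compat θ₂ lam), p₂ θ₂) := by
  classical
  intro lam
  rw [iSup_compat_eq_sup, iSup_compat_eq_sup, iSup_compat_eq_sup]
  set s : Finset (F.El (F.sup Θ₁ Θ₂)) :=
    Finset.univ.filter (fun θ => F.compat θ lam) with hs
  set s₁ : Finset (F.El Θ₁) := Finset.univ.filter (fun θ₁ => F.compat θ₁ lam) with hs₁
  set s₂ : Finset (F.El Θ₂) := Finset.univ.filter (fun θ₂ => F.compat θ₂ lam) with hs₂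
  have hmem : ∀ {θ}, θ ∈ s ↔ F.compat θ lam := by simp [hs]
  have hmem₁ : ∀ {θ₁}, θ₁ ∈ s₁ ↔ F.compat θ₁ lam := by simp [hs₁]
  have hmem₂ : ∀ {θ₂}, θ₂ ∈ s₂ ↔ F.compat θ₂ lam := by simp [hs₂]
  apply _root_.le_antisymm
  · refine Finset.sup_le fun θ hθ => ?_
    have hc := compat3_of_compat (hmem.1 hθ)
    obtain ⟨h1, h2⟩ := (hCI lam _ _).1 hc
    exact mul_le_mul' (Finset.le_sup (hmem₁.2 h1)) (Finset.le_sup (hmem₂.2 h2))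
  · obtain ⟨a₁, ha₁⟩ := exists_compat Θ₁ Λ lam
    obtain ⟨a₂, ha₂⟩ := exists_compat Θ₂ Λ lam
    obtain ⟨θ₁, hθ₁s, hθ₁⟩ := s₁.exists_mem_eq_sup ⟨a₁, hmem₁.2 ha₁⟩ p₁
    obtain ⟨θ₂, hθ₂s, hθ₂⟩ := s₂.exists_mem_eq_sup ⟨a₂, hmem₂.2 ha₂⟩ p₂
    have h3 : F.compat3 θ₁ θ₂ lam :=
      (hCI lam θ₁ θ₂).2 ⟨hmem₁.1 hθ₁s, hmem₂.1 hθ₂s⟩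
    obtain ⟨θ, hθc, hp1, hp2⟩ := compat_of_compat3 h3
    have : F.combine p₁ p₂ θ = p₁ θ₁ * p₂ θ₂ := by
      simp [FCF.combine, hp1, hp2]
    rw [hθ₁, hθ₂, ← this]
    exact Finset.le_sup (hmem.2 hθc)

end FCF
end
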